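/- Let M = {(x,y) ∈ ℂ² : x ≠ 0, x ≠ 1, y ≠ 0, y ≠ 1, x − y ≠ −1, x − y ≠ 0, x − y ≠ 1} be the complement of the seven affine lines of Suciu's deleted B_3 arrangement, and let f_W: M → ℂ* be given by f_W(x,y) = x(y−1)(x−y−1)² / ((x−1)y(x−y+1)²). Then the polynomial identity x(y−1)(x−y−1)² − (x−1)y(x−y+1)² = −(x−y)(x+y−1)² holds in ℂ[x,y], and consequently for every (x,y) ∈ M one has f_W(x,y) = 1 if and only if x + y = 1; that is, the fiber of f_W over 1 is the intersection with M of the line L: x + y − 1 = 0, counted with multiplicity two. -/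
import Mathlib


open MvPolynomial

/-- The complement `M ⊂ ℂ²` of the seven affine lines of Suciu's deleted `B₃`
arrangement: `x = 0`, `x = 1`, `y = 0`, `y = 1`, `x - y = -1`, `x - y = 0`,
`x - y = 1`. -/
def SuciuComplement : Set (ℂ × ℂ) :=
  {p | p.1 ≠ 0 ∧ p.1 ≠ 1 ∧ p.2 ≠ 0 ∧ p.2 ≠ 1 ∧
    p.1 - p.2 ≠ -1 ∧ p.1 - p.2 ≠ 0 ∧ p.1 - p.2 ≠ 1}

/-- The pencil `f_W(x, y) = x (y - 1) (x - y - 1)² / ((x - 1) y (x - y + 1)²)`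
associated to the translated component of the first characteristic variety of
Suciu's arrangement. -/
noncomputable def fW (p : ℂ × ℂ) : ℂ :=
  p.1 * (p.2 - 1) * (p.1 - p.2 - 1) ^ 2 / ((p.1 - 1) * p.2 * (p.1 - p.2 + 1) ^ 2)

/-- The polynomial identity
`x (y-1) (x-y-1)² - (x-1) y (x-y+1)² = -(x-y)(x+y-1)²` holds in `ℂ[x, y]`, and
consequently for every `(x, y) ∈ M` one has `f_W(x, y) = 1` iff `x + y = 1`:
the fiber of `f_W` over `1` is the intersection with `M` of the line
`L : x + y - 1 = 0` (counted with multiplicity two). -/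
theorem fW_fiber_over_one :
    ((X 0 : MvPolynomial (Fin 2) ℂ) * (X 1 - 1) * (X 0 - X 1 - 1) ^ 2 -
        (X 0 - 1) * X 1 * (X 0 - X 1 + 1) ^ 2 =
      -((X 0 - X 1) * (X 0 + X 1 - 1) ^ 2)) ∧
    ∀ p ∈ SuciuComplement, (fW p = 1 ↔ p.1 + p.2 = 1) := by
  constructor
  · ring
  · rintro ⟨x, y⟩ ⟨hx0, hx1, hy0, hy1, h1, h2, h3⟩
    have hx1' : x - 1 ≠ 0 := sub_ne_zero.mpr hx1
    have hd : (x - 1) * y * (x - y + 1) ^ 2 ≠ 0 := by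
      apply mul_ne_zero (mul_ne_zero hx1' hy0)
      have : x - y + 1 ≠ 0 := fun h => h1 (by linear_combination h)
      exact pow_ne_zero _ this
    simp only [fW, div_eq_one_iff_eq hd]
    constructor
    · intro h
      have key : -((x - y) * (x + y - 1) ^ 2) = 0 := by linear_combination h
      have : (x + y - 1) ^ 2 = 0 := by
        rcases mul_eq_zero.mp (neg_eq_zero.mp key) with h' | h'
        · exact absurd h' h2
        · exact h'
      have := pow_eq_zero_iff (n := 2) (by norm_num) |>.mp this
      linear_combination this
    · intro h
      linear_combination (-(x - y) * (x + y - 1)) * h
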